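/- arXiv:2307.03694 — 3 statements merged into one kernel-verified Lean document; each statement's English description precedes it below -/
import Mathlib

section
/- Let α ∈ (0,1), let P be a probability distribution on ℝ with finite first moment, and let F(t) = P{s : s ≤ t} be its cumulative distribution function. Then for all real numbers a ≤ b, the difference of expected pinball losses satisfies E_{y∼P}[PB_{1−α}(b, y)] − E_{y∼P}[PB_{1−α}(a, y)] = ∫_a^b (F(t) − (1−α)) dt (the integral taken with respect to Lebesgue measure). -/
/-!
For fixed `y`, the map `c ↦ PB_{1-α}(c, y)` is piecewise linear with right derivative
`1{y ≤ c} - (1 - α)`, so by the fundamental theorem of calculus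
`PB(b, y) - PB(a, y) = ∫_a^b (1{y ≤ t} - (1 - α)) dt`. Taking expectations in `y` and swapping
the two integrals (Fubini: the integrand is bounded, the `t`-domain has finite length) turns
`E[1{y ≤ t}]` into `F t`. The first moment makes each expected loss finite, so that the
difference of the expectations is the expectation of the difference.
-/

open MeasureTheory Set
open scoped Interval

/-- Pinball loss at quantile level `1 - α`. -/
noncomputable def pinball (α : ℝ) (yhat y : ℝ) : ℝ :=
  max (α * (yhat - y)) ((1 - α) * (y - yhat))

theorem integral_intervalIntegral_swap {X E : Type*} [MeasurableSpace X] {μ : Measure X}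
    [SFinite μ] [NormedAddCommGroup E] [NormedSpace ℝ E] {f : ℝ → X → E} {a b : ℝ}
    (hf : Integrable (Function.uncurry f) ((volume.restrict (Ι a b)).prod μ)) :
    ∫ x, (∫ t in a..b, f t x) ∂μ = ∫ t in a..b, ∫ x, f t x ∂μ := by
  wlog hab : a ≤ b generalizing a b
  · simp only [intervalIntegral.integral_symm b a, integral_neg]
    rw [this (by rwa [uIoc_comm]) (le_of_not_ge hab)]
  simp only [intervalIntegral.integral_of_le hab]
  rw [uIoc_of_le hab] at hf
  exact (integral_integral_swap hf).symm

theorem integrable_pinball {P : Measure ℝ} [IsFiniteMeasure P]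
    (hmom : Integrable (fun y : ℝ => y) P) (α c : ℝ) : Integrable (pinball α c) P :=
  (((integrable_const c).sub hmom).const_mul α).sup
    ((hmom.sub (integrable_const c)).const_mul (1 - α))

theorem pinball_of_le {α c y : ℝ} (h : y ≤ c) : pinball α c y = α * (c - y) :=
  max_eq_left (by linarith)

theorem pinball_of_ge {α c y : ℝ} (h : c ≤ y) : pinball α c y = (1 - α) * (y - c) :=
  max_eq_right (by linarith)

theorem hasDerivWithinAt_pinball_Ioi (α c y : ℝ) :
    HasDerivWithinAt (pinball α · y) ((Iic c).indicator 1 y - (1 - α)) (Ioi c) c := by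
  rcases le_or_gt y c with hyc | hcy
  · have hlin : HasDerivAt (fun c' => α * (c' - y)) α c := by
      simpa using ((hasDerivAt_id c).sub_const y).const_mul α
    refine (hlin.hasDerivWithinAt.congr (fun c' hc' => pinball_of_le ?_)
      (pinball_of_le hyc)).congr_deriv ?_
    · exact hyc.trans (le_of_lt hc')
    · simp [hyc]
  · have hlin : HasDerivAt (fun c' => (1 - α) * (y - c')) (-(1 - α)) c := by
      simpa using ((hasDerivAt_id c).const_sub y).const_mul (1 - α)
    refine (hlin.congr_of_eventuallyEq ?_).hasDerivWithinAt.congr_deriv ?_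
    · filter_upwards [Iic_mem_nhds hcy] with c' hc' using pinball_of_ge hc'
    · simp [not_le.2 hcy]

theorem pinball_sub_pinball_eq_intervalIntegral (α a b y : ℝ) :
    pinball α b y - pinball α a y = ∫ t in a..b, ((Iic t).indicator 1 y - (1 - α)) := by
  have hmono : Monotone fun t : ℝ => (Iic t).indicator (1 : ℝ → ℝ) y := fun s t hst =>
    indicator_le_indicator_of_subset (Iic_subset_Iic.2 hst) (fun _ => zero_le_one) y
  exact (intervalIntegral.integral_eq_sub_of_hasDeriv_right (by unfold pinball; fun_prop)
    (fun c _ => hasDerivWithinAt_pinball_Ioi α c y)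
    (hmono.intervalIntegrable.sub intervalIntegrable_const)).symm

theorem pinball_diff_eq_integral_cdf_general
    (α : ℝ)
    (P : Measure ℝ) [IsProbabilityMeasure P]
    (hmom : Integrable (fun y : ℝ => y) P)
    (a b : ℝ) :
    (∫ y, pinball α b y ∂P) - (∫ y, pinball α a y ∂P)
      = ∫ t in a..b, ((P (Iic t)).toReal - (1 - α)) := by
  have hint : Integrable (Function.uncurry fun t y => (Iic t).indicator (1 : ℝ → ℝ) y - (1 - α))
      ((volume.restrict (Ι a b)).prod P) := by
    have : IsFiniteMeasure (volume.restrict (Ι a b)) := by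
      rw [uIoc]; exact isFiniteMeasure_restrict.2 measure_Ioc_lt_top.ne
    exact ((integrable_const 1).indicator (measurableSet_le measurable_snd measurable_fst)).sub
      (integrable_const _)
  calc (∫ y, pinball α b y ∂P) - (∫ y, pinball α a y ∂P)
      = ∫ y, (∫ t in a..b, ((Iic t).indicator 1 y - (1 - α))) ∂P := by
        rw [← integral_sub (integrable_pinball hmom α b) (integrable_pinball hmom α a)]
        simp only [pinball_sub_pinball_eq_intervalIntegral]
    _ = ∫ t in a..b, ∫ y, ((Iic t).indicator 1 y - (1 - α)) ∂P :=
        integral_intervalIntegral_swap hint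
    _ = ∫ t in a..b, ((P (Iic t)).toReal - (1 - α)) := by
        refine intervalIntegral.integral_congr fun t _ => ?_
        rw [integral_sub ((integrable_const 1).indicator measurableSet_Iic) (integrable_const _),
          integral_indicator_one measurableSet_Iic]
        simp [measureReal_def]

/-- for a probability measure `P` on `ℝ` with finite first moment and
CDF `F`, for all `a ≤ b`, the difference of expected pinball losses is
`∫_a^b (F t - (1 - α)) dt`. -/
theorem pinball_diff_eq_integral_cdf
    (α : ℝ) (hα : α ∈ Set.Ioo (0 : ℝ) 1)
    (P : Measure ℝ) [IsProbabilityMeasure P]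
    (hmom : Integrable (fun y : ℝ => y) P)
    (a b : ℝ) (hab : a ≤ b) :
    (∫ y, pinball α b y ∂P) - (∫ y, pinball α a y ∂P)
      = ∫ t in a..b, ((P (Iic t)).toReal - (1 - α)) :=
  pinball_diff_eq_integral_cdf_general α P hmom a b
end

section
/- Let α, α' ∈ (0,1), ρ > 0, and let P be a probability distribution on ℝ with finite first moment that is absolutely continuous with respect to Lebesgue measure with density bounded above by ρ. Suppose a ∈ ℝ satisfies P{y : y ≤ a} = 1−α' and Δ ∈ ℝ is such that b := a + Δ satisfies P{y : y ≤ b} = 1−α. Then E_{y∼P}[PB_{1−α}(a, y)] − E_{y∼P}[PB_{1−α}(b, y)] ≥ (α − α')² / (2ρ). -/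
/-
Write `L c = E[PB_{1-α}(c, y)]` and `F` for the CDF of `P`. Since
`PB_{1-α}(c, y) = (1 - α)(y - c) + (c - y)⁺` and `(u - y)⁺ - (v - y)⁺ = ∫_v^u 1{y ≤ t} dt`,
Fubini gives `L u - L v = ∫_v^u (F t - (1 - α)) dt`; as `F b = 1 - α` for `b = a + Δ`, the gain is
`L a - L b = ∫_b^a (F t - F b) dt`. The density bound makes `F` `ρ`-Lipschitz, so this monotone
integrand is at least `(δ - ρ |a - t|)⁺` with `δ = |F a - F b| = |α - α'|`, a tent of area
`δ² / (2ρ)`.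
-/

open MeasureTheory Set

open ProbabilityTheory

theorem pinball_eq (α c y : ℝ) : pinball α c y = (1 - α) * (y - c) + max (c - y) 0 := by
  rcases le_total y c with h | h
  · rw [pinball, max_eq_left (by nlinarith), max_eq_left (by linarith)]; ring
  · rw [pinball, max_eq_right (by nlinarith), max_eq_right (by linarith)]; ring

theorem max_sub_sub_max_sub_eq_integral_indicator (u v y : ℝ) :
    max (u - y) 0 - max (v - y) 0 = ∫ t in v..u, (Iic t).indicator 1 y := by
  symm
  refine intervalIntegral.integral_eq_sub_of_hasDeriv_right (f := fun t => max (t - y) 0)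
    (by fun_prop) (fun x _ => ?_) (Monotone.intervalIntegrable fun s t hst => ?_)
  · rcases lt_or_ge x y with hxy | hxy
    · have : (fun t => max (t - y) 0) =ᶠ[nhds x] fun _ => 0 := by
        filter_upwards [Iio_mem_nhds hxy] with t ht
        exact max_eq_right (by linarith [mem_Iio.1 ht])
      simpa [indicator_of_notMem (show y ∉ Iic x from not_le.2 hxy)] using
        ((hasDerivAt_const x (0 : ℝ)).congr_of_eventuallyEq this).hasDerivWithinAt
    · have : (fun t => max (t - y) 0) =ᶠ[nhdsWithin x (Ioi x)] fun t => t - y := by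
        filter_upwards [self_mem_nhdsWithin] with t ht
        exact max_eq_left (by linarith [mem_Ioi.1 ht])
      simpa [indicator_of_mem (show y ∈ Iic x from hxy)] using
        (((hasDerivAt_sub_const_iff y).2 (hasDerivAt_id x)).hasDerivWithinAt).congr_of_eventuallyEq
          this (by simpa using hxy)
  · exact indicator_le_indicator_of_subset (Iic_subset_Iic.2 hst) (fun _ => zero_le_one) y

section ExpectedPinball

variable {P : Measure ℝ} [IsProbabilityMeasure P]

theorem integrable_max_sub (hmom : Integrable (fun y : ℝ => y) P) (c : ℝ) :
    Integrable (fun y => max (c - y) 0) P :=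
  ((integrable_const c).sub hmom).pos_part

theorem integral_max_sub_sub_integral_max_sub (hmom : Integrable (fun y : ℝ => y) P) (u v : ℝ) :
    ∫ y, max (u - y) 0 ∂P - ∫ y, max (v - y) 0 ∂P = ∫ t in v..u, cdf P t := by
  have : IsFiniteMeasure (volume.restrict (uIoc v u)) := by rw [uIoc]; infer_instance
  have hint : Integrable (Function.uncurry fun t y => (Iic t).indicator (1 : ℝ → ℝ) y)
      ((volume.restrict (uIoc v u)).prod P) :=
    (integrable_const (1 : ℝ)).indicator (measurableSet_le measurable_snd measurable_fst)
  rw [← integral_sub (integrable_max_sub hmom u) (integrable_max_sub hmom v)]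
  simp_rw [max_sub_sub_max_sub_eq_integral_indicator, ← intervalIntegral_integral_swap hint,
    integral_indicator_one measurableSet_Iic, cdf_eq_real]

theorem integral_pinball_sub_integral_pinball (hmom : Integrable (fun y : ℝ => y) P)
    (α u v : ℝ) :
    ∫ y, pinball α u y ∂P - ∫ y, pinball α v y ∂P = ∫ t in v..u, (cdf P t - (1 - α)) := by
  have hexp : ∀ c, ∫ y, pinball α c y ∂P
      = (1 - α) * (∫ y, y ∂P - c) + ∫ y, max (c - y) 0 ∂P := by
    intro c
    simp_rw [pinball_eq]
    have hlin : Integrable (fun y => y - c) P := hmom.sub (integrable_const c)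
    rw [integral_add (hlin.const_mul _) (integrable_max_sub hmom c),
      integral_const_mul, integral_sub hmom (integrable_const c)]
    simp
  rw [hexp, hexp, intervalIntegral.integral_sub (cdf P).mono.intervalIntegrable
    intervalIntegrable_const, ← integral_max_sub_sub_integral_max_sub hmom,
    intervalIntegral.integral_const, smul_eq_mul]
  ring

end ExpectedPinball

theorem MeasureTheory.Measure.le_smul_of_rnDeriv_le {α : Type*} [MeasurableSpace α]
    {μ ν : Measure α} [μ.HaveLebesgueDecomposition ν] (hac : μ ≪ ν) {c : ENNReal}
    (h : ∀ᵐ x ∂ν, μ.rnDeriv ν x ≤ c) : μ ≤ c • ν :=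
  calc μ = ν.withDensity (μ.rnDeriv ν) := (Measure.withDensity_rnDeriv_eq μ ν hac).symm
    _ ≤ ν.withDensity fun _ => c := withDensity_mono h
    _ = c • ν := withDensity_const c

theorem ProbabilityTheory.cdf_sub_cdf_le {P : Measure ℝ} [IsProbabilityMeasure P] {ρ : ℝ}
    (hρ : 0 ≤ ρ) (hP : P ≤ ENNReal.ofReal ρ • volume) {s t : ℝ} (hst : s ≤ t) :
    cdf P t - cdf P s ≤ ρ * (t - s) := by
  rw [← ENNReal.ofReal_le_ofReal_iff (by nlinarith), ENNReal.ofReal_mul hρ,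
    ← StieltjesFunction.measure_Ioc, measure_cdf, ← Real.volume_Ioc]
  exact hP _

section TentBound

variable {f : ℝ → ℝ} {ρ : ℝ}

theorem sq_div_two_mul_le_integral_sub_of_le (hf : Monotone f) (hρ : 0 < ρ)
    (hlip : ∀ s t, s ≤ t → f t - f s ≤ ρ * (t - s)) {a b : ℝ} (hba : b ≤ a) :
    (f a - f b) ^ 2 / (2 * ρ) ≤ ∫ t in b..a, (f t - f b) := by
  set δ := f a - f b
  set r := δ / ρ
  have hr : b ≤ a - r := by
    have : r ≤ a - b := (div_le_iff₀' hρ).2 (hlip b a hba)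
    linarith
  have hr0 : 0 ≤ r := div_nonneg (sub_nonneg.2 (hf hba)) hρ.le
  have hint : ∀ c d, IntervalIntegrable (fun t => f t - f b) volume c d := fun c d =>
    hf.intervalIntegrable.sub intervalIntegrable_const
  calc δ ^ 2 / (2 * ρ) = ∫ t in (a - r)..a, (δ - ρ * (a - t)) := by
        rw [intervalIntegral.integral_comp_sub_left (fun x => δ - ρ * x),
          intervalIntegral.integral_sub intervalIntegrable_const
            (Continuous.intervalIntegrable (by fun_prop) _ _),
          intervalIntegral.integral_const_mul]
        simp only [sub_self, sub_sub_cancel, intervalIntegral.integral_const, sub_zero,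
          smul_eq_mul, integral_id, ne_eq, OfNat.ofNat_ne_zero, not_false_eq_true, zero_pow, r]
        field_simp
        ring
    _ ≤ ∫ t in (a - r)..a, (f t - f b) :=
        intervalIntegral.integral_mono_on (by linarith)
          (Continuous.intervalIntegrable (by fun_prop) _ _) (hint _ _) fun t ht => by
          linarith [hlip t a ht.2]
    _ ≤ ∫ t in b..a, (f t - f b) := by
        refine intervalIntegral.integral_mono_interval hr (by linarith) le_rfl ?_ (hint _ _)
        filter_upwards [ae_restrict_mem measurableSet_Ioc] with t ht
        exact sub_nonneg.2 (hf ht.1.le)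

theorem sq_div_two_mul_le_integral_sub (hf : Monotone f) (hρ : 0 < ρ)
    (hlip : ∀ s t, s ≤ t → f t - f s ≤ ρ * (t - s)) (a b : ℝ) :
    (f a - f b) ^ 2 / (2 * ρ) ≤ ∫ t in b..a, (f t - f b) := by
  wlog hba : b ≤ a generalizing f a b
  -- reflect through the origin: `s ↦ -f (-s)` is again monotone and `ρ`-Lipschitz
  · have hg : Monotone fun s => -f (-s) := fun s t hst => neg_le_neg (hf (neg_le_neg hst))
    have := this hg (fun s t hst => by linarith [hlip (-t) (-s) (neg_le_neg hst)]) (-a) (-b)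
      (neg_le_neg (not_le.1 hba).le)
    rw [← intervalIntegral.integral_comp_neg] at this
    convert this using 1
    · simp only [neg_neg]; ring
    · rw [intervalIntegral.integral_symm, ← intervalIntegral.integral_neg]
      simp [neg_add_eq_sub]
  exact sq_div_two_mul_le_integral_sub_of_le hf hρ hlip hba

end TentBound

theorem quantitative_shift_lemma_general
    (α α' : ℝ)
    (ρ : ℝ) (hρ : 0 < ρ)
    (P : Measure ℝ) [IsProbabilityMeasure P]
    (hmom : Integrable (fun y : ℝ => y) P)
    (hac : P ≪ (volume : Measure ℝ))
    (hdens : ∀ᵐ x ∂(volume : Measure ℝ), P.rnDeriv volume x ≤ ENNReal.ofReal ρ)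
    (a Δ : ℝ)
    (ha : (P (Iic a)).toReal = 1 - α')
    (hb : (P (Iic (a + Δ))).toReal = 1 - α) :
    (∫ y, pinball α a y ∂P) - (∫ y, pinball α (a + Δ) y ∂P)
      ≥ (α - α') ^ 2 / (2 * ρ) := by
  have hPρ : P ≤ ENNReal.ofReal ρ • volume := Measure.le_smul_of_rnDeriv_le hac hdens
  rw [← measureReal_def, ← cdf_eq_real] at ha hb
  rw [integral_pinball_sub_integral_pinball hmom, ← hb]
  calc (α - α') ^ 2 / (2 * ρ) = (cdf P a - cdf P (a + Δ)) ^ 2 / (2 * ρ) := by rw [ha, hb]; ring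
    _ ≤ _ := sq_div_two_mul_le_integral_sub (cdf P).mono hρ
      (fun _ _ => cdf_sub_cdf_le hρ.le hPρ) a (a + Δ)

/-- quantitative shift lemma: for a probability measure `P` on `ℝ`
with finite first moment, absolutely continuous w.r.t. Lebesgue measure with
density bounded by `ρ`, if `P(-∞, a] = 1 - α'` and `b = a + Δ` satisfies
`P(-∞, b] = 1 - α`, then shifting from `a` to `b` decreases the expected pinball
loss at level `1 - α` by at least `(α - α')² / (2ρ)`. -/
theorem quantitative_shift_lemma
    (α α' : ℝ) (hα : α ∈ Set.Ioo (0 : ℝ) 1) (hα' : α' ∈ Set.Ioo (0 : ℝ) 1)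
    (ρ : ℝ) (hρ : 0 < ρ)
    (P : Measure ℝ) [IsProbabilityMeasure P]
    (hmom : Integrable (fun y : ℝ => y) P)
    (hac : P ≪ (volume : Measure ℝ))
    (hdens : ∀ᵐ x ∂(volume : Measure ℝ), P.rnDeriv volume x ≤ ENNReal.ofReal ρ)
    (a Δ : ℝ)
    (ha : (P (Iic a)).toReal = 1 - α')
    (hb : (P (Iic (a + Δ))).toReal = 1 - α) :
    (∫ y, pinball α a y ∂P) - (∫ y, pinball α (a + Δ) y ∂P)
      ≥ (α - α') ^ 2 / (2 * ρ) :=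
  quantitative_shift_lemma_general α α' ρ hρ P hmom hac hdens a Δ ha hb
end

section
/- Let X be a measurable space, α ∈ (0,1), and μ a probability measure on X × ℝ (the joint distribution of a feature x and a real-valued score s, modeling s = s(x,y) for (x,y) drawn from the null distribution D). Let H be a class of measurable functions q' : X → ℝ that is closed under additive constant shifts: for every q' ∈ H and Δ ∈ ℝ, the function x ↦ q'(x) + Δ also belongs to H. Suppose q ∈ H minimizes the expected pinball loss over H, i.e. ∫ PB_{1−α}(q(x), s) dμ(x,s) ≤ ∫ PB_{1−α}(q'(x), s) dμ(x,s) for all q' ∈ H (with these integrals finite for q and its constant shifts), and suppose the distribution of s − q(x) under μ has a continuous cumulative distribution function. Then the attack A_q rejecting exactly when s ≥ q(x) has false positive rate α: μ{(x,s) : s ≥ q(x)} = α. -/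
open MeasureTheory Set

open ProbabilityTheory Filter Topology

/-!
With `T = s - q x`, the pinball loss of `q + Δ` at `(x, s)` is `pinball α Δ T`, so the
hypotheses say that `Δ = 0` minimises `Δ ↦ E[pinball α Δ T]` under the law `ν` of `T`.
Comparing `Δ` with `0` pointwise gives `ν(T > Δ) * Δ ≤ α * Δ`, i.e. `ν(T > Δ) ≤ α` for `Δ > 0`
and `ν(T > Δ) ≥ α` for `Δ < 0`. Continuity of the CDF of `T` squeezes this to `ν(T ≥ 0) = α`.
-/

theorem pinball_eq_mul_sub_add_max (α a b : ℝ) : pinball α a b = α * (a - b) + max (b - a) 0 := by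
  rw [pinball, ← max_add_add_left, add_zero, max_comm]
  congr 1
  ring

theorem pinball_add_eq_pinball_sub (α c Δ y : ℝ) : pinball α (c + Δ) y = pinball α Δ (y - c) := by
  simp only [pinball_eq_mul_sub_add_max]
  ring_nf

theorem continuous_pinball (α Δ : ℝ) : Continuous (pinball α Δ) := by
  unfold pinball
  fun_prop

theorem pinball_sub_pinball_zero_le (α Δ t : ℝ) :
    pinball α Δ t - pinball α 0 t ≤ α * Δ - (Ioi Δ).indicator (fun _ => Δ) t := by
  simp only [pinball_eq_mul_sub_add_max, zero_sub, sub_zero]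
  by_cases ht : Δ < t
  · rw [indicator_of_mem (mem_Ioi.2 ht), max_eq_left (by linarith)]
    linarith [le_max_left t 0]
  · rw [indicator_of_notMem (notMem_Ioi.2 (not_lt.1 ht)), max_eq_right (by linarith)]
    linarith [le_max_right t 0]

section

variable {ν : Measure ℝ} [IsProbabilityMeasure ν] {α : ℝ}

theorem measureReal_Ioi_mul_le_of_pinball_min (hint : ∀ Δ, Integrable (pinball α Δ) ν)
    (hmin : ∀ Δ, ∫ t, pinball α 0 t ∂ν ≤ ∫ t, pinball α Δ t ∂ν) (Δ : ℝ) :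
    ν.real (Ioi Δ) * Δ ≤ α * Δ := by
  have hind : Integrable ((Ioi Δ).indicator fun _ => Δ) ν :=
    (integrable_const Δ).indicator measurableSet_Ioi
  have := calc
    0 ≤ ∫ t, (pinball α Δ t - pinball α 0 t) ∂ν := by
      rw [integral_sub (hint Δ) (hint 0), sub_nonneg]
      exact hmin Δ
    _ ≤ ∫ t, (α * Δ - (Ioi Δ).indicator (fun _ => Δ) t) ∂ν :=
      integral_mono ((hint Δ).sub (hint 0)) ((integrable_const _).sub hind)
        (pinball_sub_pinball_zero_le α Δ)
    _ = α * Δ - ν.real (Ioi Δ) * Δ := by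
      rw [integral_sub (integrable_const _) hind, integral_const,
        integral_indicator_const Δ measurableSet_Ioi]
      simp
  linarith

theorem cdf_eq_one_sub_of_measureReal_Ioi_mul_le (hkey : ∀ Δ, ν.real (Ioi Δ) * Δ ≤ α * Δ)
    (hcont : ContinuousAt (cdf ν) 0) : cdf ν 0 = 1 - α := by
  have hIoi (Δ : ℝ) : ν.real (Ioi Δ) = 1 - cdf ν Δ := by
    rw [← compl_Iic, probReal_compl_eq_one_sub measurableSet_Iic, cdf_eq_real]
  have hpos : ∀ Δ ∈ Ioi (0 : ℝ), 1 - α ≤ cdf ν Δ := fun Δ hΔ => by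
    have := le_of_mul_le_mul_right (hkey Δ) hΔ
    linarith [hIoi Δ]
  have hneg : ∀ Δ ∈ Iio (0 : ℝ), cdf ν Δ ≤ 1 - α := fun Δ hΔ => by
    have := (mul_le_mul_right_of_neg hΔ).1 (hkey Δ)
    linarith [hIoi Δ]
  exact le_antisymm
    (le_of_tendsto (hcont.mono_left nhdsWithin_le_nhds) (eventually_nhdsWithin_of_forall hneg))
    (ge_of_tendsto (hcont.mono_left nhdsWithin_le_nhds) (eventually_nhdsWithin_of_forall hpos))

theorem measureReal_Ici_eq_one_sub_cdf {x : ℝ} (hx : ContinuousAt (cdf ν) x) :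
    ν.real (Ici x) = 1 - cdf ν x := by
  conv_lhs => rw [← measure_cdf ν]
  rw [measureReal_def, StieltjesFunction.measure_Ici _ (tendsto_cdf_atTop ν),
    hx.continuousWithinAt.leftLim_eq, ENNReal.toReal_ofReal (sub_nonneg.2 (cdf_le_one ν x))]

theorem measureReal_Ici_zero_eq_of_pinball_min (hint : ∀ Δ, Integrable (pinball α Δ) ν)
    (hmin : ∀ Δ, ∫ t, pinball α 0 t ∂ν ≤ ∫ t, pinball α Δ t ∂ν)
    (hcont : ContinuousAt (cdf ν) 0) : ν.real (Ici 0) = α := by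
  rw [measureReal_Ici_eq_one_sub_cdf hcont,
    cdf_eq_one_sub_of_measureReal_Ioi_mul_le (measureReal_Ioi_mul_le_of_pinball_min hint hmin)
      hcont, sub_sub_cancel]

end

theorem quantile_regression_attack_fpr_general
    {X : Type*} [MeasurableSpace X]
    (α : ℝ)
    (μ : Measure (X × ℝ)) [IsProbabilityMeasure μ]
    (H : Set (X → ℝ))
    (hHmeas : ∀ q' ∈ H, Measurable q')
    (hHshift : ∀ q' ∈ H, ∀ Δ : ℝ, (fun x => q' x + Δ) ∈ H)
    (q : X → ℝ) (hq : q ∈ H)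
    (hint : ∀ Δ : ℝ, Integrable (fun p : X × ℝ => pinball α (q p.1 + Δ) p.2) μ)
    (hmin : ∀ q' ∈ H, ∫ p : X × ℝ, pinball α (q p.1) p.2 ∂μ
      ≤ ∫ p : X × ℝ, pinball α (q' p.1) p.2 ∂μ)
    (hcont : Continuous fun t : ℝ => (μ {p : X × ℝ | p.2 - q p.1 ≤ t}).toReal) :
    (μ {p : X × ℝ | q p.1 ≤ p.2}).toReal = α := by
  set T : X × ℝ → ℝ := fun p => p.2 - q p.1
  have hT : Measurable T := measurable_snd.sub ((hHmeas q hq).comp measurable_fst)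
  have : IsProbabilityMeasure (μ.map T) := Measure.isProbabilityMeasure_map hT.aemeasurable
  have hshift (Δ : ℝ) : (fun p : X × ℝ => pinball α (q p.1 + Δ) p.2) = pinball α Δ ∘ T := by
    ext p
    exact pinball_add_eq_pinball_sub α (q p.1) Δ p.2
  have hint_law (Δ : ℝ) : Integrable (pinball α Δ) (μ.map T) :=
    (integrable_map_measure (continuous_pinball α Δ).aestronglyMeasurable hT.aemeasurable).2
      (hshift Δ ▸ hint Δ)
  have hrisk (Δ : ℝ) : ∫ t, pinball α Δ t ∂μ.map T = ∫ p, pinball α (q p.1 + Δ) p.2 ∂μ := by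
    rw [integral_map hT.aemeasurable (continuous_pinball α Δ).aestronglyMeasurable, hshift]
    rfl
  have hmin_law (Δ : ℝ) : ∫ t, pinball α 0 t ∂μ.map T ≤ ∫ t, pinball α Δ t ∂μ.map T := by
    simpa only [hrisk, add_zero] using hmin _ (hHshift q hq Δ)
  have hcdf : cdf (μ.map T) = fun t => (μ {p | p.2 - q p.1 ≤ t}).toReal := by
    ext t
    rw [cdf_eq_real, map_measureReal_apply hT measurableSet_Iic]
    rfl
  have hfpr := measureReal_Ici_zero_eq_of_pinball_min hint_law hmin_law (hcdf ▸ hcont).continuousAt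
  have hreject : {p : X × ℝ | q p.1 ≤ p.2} = T ⁻¹' Ici 0 := by
    ext p
    simp [T, sub_nonneg]
  rwa [hreject, ← measureReal_def, ← map_measureReal_apply hT measurableSet_Ici]

/-- Theorem 1 of the paper: if `q` minimizes expected pinball loss at
level `1-α` over a class `H` of measurable threshold functions closed under additive
constant shifts, the integrals are finite for `q` and its constant shifts, and the
distribution of `s - q(x)` has a continuous CDF, then the attack rejecting exactly
when `s ≥ q(x)` has false positive rate `α`. -/
theorem quantile_regression_attack_fpr
    {X : Type*} [MeasurableSpace X]
    (α : ℝ) (hα : α ∈ Set.Ioo (0 : ℝ) 1)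
    (μ : Measure (X × ℝ)) [IsProbabilityMeasure μ]
    (H : Set (X → ℝ))
    (hHmeas : ∀ q' ∈ H, Measurable q')
    (hHshift : ∀ q' ∈ H, ∀ Δ : ℝ, (fun x => q' x + Δ) ∈ H)
    (q : X → ℝ) (hq : q ∈ H)
    (hint : ∀ Δ : ℝ, Integrable (fun p : X × ℝ => pinball α (q p.1 + Δ) p.2) μ)
    (hmin : ∀ q' ∈ H, ∫ p : X × ℝ, pinball α (q p.1) p.2 ∂μ
      ≤ ∫ p : X × ℝ, pinball α (q' p.1) p.2 ∂μ)
    (hcont : Continuous fun t : ℝ => (μ {p : X × ℝ | p.2 - q p.1 ≤ t}).toReal) :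
    (μ {p : X × ℝ | q p.1 ≤ p.2}).toReal = α :=
  quantile_regression_attack_fpr_general α μ H hHmeas hHshift q hq hint hmin hcont
end
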